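/- Let X be a nonnegative random variable with essential supremum M < ∞ whose cdf F_X is continuous and strictly increasing on [0, M], let g be a continuous strictly increasing distortion function, ϱ ≥ 0, and let h : [0, M] → ℝ be continuous and increasing. Define z₀ = sup{ z ∈ ℝ : (1+ϱ) g(S_X(z)) ≥ 1 } and L(a,b) = h(b) + a + (1+ϱ)∫_a^b g(S_X(t)) dt for 0 ≤ a ≤ b ≤ M. Assume h(M) + z₀ + π^g((X − z₀)₊) > w₀ − ξ ≥ h(0). Consider the problem sup_{I∈𝓘} ℙ( w₀ − h(X) − X + I(X) − π^g(I(X)) ≥ ξ ). Then: (i) if h(z₀) + z₀ ≥ w₀ − ξ, the contract I ≡ 0 (no reinsurance) is optimal; (ii) if h(z₀) + z₀ < w₀ − ξ, there exists b* ∈ (z₀, M) with L(z₀, b*) = w₀ − ξ, and the stop-loss contract with upper limit I_{z₀,b*} is optimal, i.e., for every I ∈ 𝓘, ℙ( w₀ − h(X) − X + I(X) − π^g(I(X)) ≥ ξ ) ≤ ℙ( w₀ − h(X) − X + I_{z₀,b*}(X) − π^g(I_{z₀,b*}(X)) ≥ ξ ) = F_X(b*). -/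

import Mathlib

open MeasureTheory

/-- A distortion function: increasing `g : [0,1] → [0,1]` with `g 0 = 0` and `g 1 = 1`. -/
def IsDistortion (g : ℝ → ℝ) : Prop :=
  MonotoneOn g (Set.Icc 0 1) ∧ (∀ x ∈ Set.Icc (0:ℝ) 1, g x ∈ Set.Icc (0:ℝ) 1) ∧
    g 0 = 0 ∧ g 1 = 1

/-- The cdf of a real random variable `Z` under `P`. -/
noncomputable def cdfOf {Ω : Type*} [MeasurableSpace Ω] (P : Measure Ω) (Z : Ω → ℝ) :
    ℝ → ℝ := fun z => (P {ω | Z ω ≤ z}).toReal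

/-- Distorted expectation `E^g[Z] = ∫_0^∞ g(1 − F_Z(z)) dz` of a nonnegative random
variable `Z`. -/
noncomputable def distExp {Ω : Type*} [MeasurableSpace Ω] (g : ℝ → ℝ) (P : Measure Ω)
    (Z : Ω → ℝ) : ℝ := ∫ z in Set.Ioi (0 : ℝ), g (1 - cdfOf P Z z)

/-- The ceded loss function `I_{z,y}`: `0` on `[0,z]`, `x − z` on `(z,y]`, `y − z` beyond. -/
noncomputable def Ifun (z y : ℝ) : ℝ → ℝ := fun x =>
  if x ≤ z then 0 else if x ≤ y then x - z else y - z

/-- A ceded loss function: `I(0) = 0`, with both `I` and `x ↦ x − I(x)` increasing on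
`[0,∞)`. -/
def IsCeded (I : ℝ → ℝ) : Prop :=
  I 0 = 0 ∧ MonotoneOn I (Set.Ici 0) ∧ MonotoneOn (fun x => x - I x) (Set.Ici 0)

/-- The insurer's goal-reaching probability under contract `I` with a comonotonic background
risk `h(X)`: `ℙ(w₀ − h(X) − X + I(X) − π^g(I(X)) ≥ ξ)`. -/
noncomputable def objVal {Ω : Type*} [MeasurableSpace Ω] (P : Measure Ω) (X : Ω → ℝ)
    (g h : ℝ → ℝ) (ϱ w₀ ξ : ℝ) (I : ℝ → ℝ) : ℝ :=
  (P {ω | ξ ≤ w₀ - h (X ω) - X ω + I (X ω)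
      - (1 + ϱ) * distExp g P (fun ω' => I (X ω'))}).toReal

/-- The function `L(a,b) = h(b) + a + (1+ϱ)∫_a^b g(S_X(t)) dt`. -/
noncomputable def Lfun {Ω : Type*} [MeasurableSpace Ω] (P : Measure Ω) (X : Ω → ℝ)
    (g h : ℝ → ℝ) (ϱ : ℝ) (a b : ℝ) : ℝ :=
  h b + a + (1 + ϱ) * ∫ t in a..b, g (1 - cdfOf P X t)

/-!
Write `G = g ∘ S_X` and `k = 1 + ϱ`, so that `k G ≥ 1` below `z₀` and `k G ≤ 1` above it. For
every ceded `I` the retained loss plus premium `x - I x + k E^g[I(X)]` is at least `x` when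
`x ≤ z₀`, as cover below `z₀` costs at least what it pays, and at least `z₀ + k ∫_{z₀}^x G` when
`x ≥ z₀`. The second bound compares `g(S_{I(X)})` on `(I s, I u)` with `G u` on the cells `[s, u]`
of ever finer partitions of `[z₀, x]`, using that `I` is 1-Lipschitz. So where the loss exceeds
`z₀` the goal can only be reached if `L(z₀, X) ≤ w₀ - ξ`. As `L(z₀, ·)` is strictly increasing on
`[z₀, M]`, in case (i) this never happens and smaller losses reach the goal only if they do so
without reinsurance; in case (ii) the goal is reached only on `{X ≤ b*}`, which is exactly where
`I_{z₀,b*}` reaches it.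
-/

open Set Filter

section Cdf

variable {Ω : Type*} [MeasurableSpace Ω] {P : Measure Ω} {Z : Ω → ℝ}

lemma cdfOf_mono [IsFiniteMeasure P] : Monotone (cdfOf P Z) := fun _ _ hab =>
  ENNReal.toReal_mono (measure_ne_top _ _) (measure_mono fun _ hω => le_trans hω hab)

lemma cdfOf_mem_Icc [IsProbabilityMeasure P] (z : ℝ) : cdfOf P Z z ∈ Icc 0 1 :=
  ⟨ENNReal.toReal_nonneg, ENNReal.toReal_le_of_le_ofReal zero_le_one (by simpa using prob_le_one)⟩

lemma cdfOf_eq_one [IsProbabilityMeasure P] {z : ℝ} (hz : ∀ᵐ ω ∂P, Z ω ≤ z) :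
    cdfOf P Z z = 1 := by
  simp [cdfOf, measure_congr (eventuallyEq_univ.mpr hz)]

lemma cdfOf_eq_zero {z : ℝ} (hz : ∀ ω, z < Z ω) : cdfOf P Z z = 0 := by
  simp [cdfOf, fun ω => (hz ω).not_ge]

end Cdf

/-- `g(S_Z(z))`, the integrand of the distorted expectation `E^g[Z]`. -/
noncomputable def distortedSurvival {Ω : Type*} [MeasurableSpace Ω] (g : ℝ → ℝ)
    (P : Measure Ω) (Z : Ω → ℝ) (z : ℝ) : ℝ :=
  g (1 - cdfOf P Z z)

section DistortedSurvival

variable {Ω : Type*} [MeasurableSpace Ω] {P : Measure Ω} [IsProbabilityMeasure P]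
  {g : ℝ → ℝ}

lemma one_sub_cdfOf_mem_Icc (Z : Ω → ℝ) (z : ℝ) : 1 - cdfOf P Z z ∈ Icc 0 1 := by
  obtain ⟨h0, h1⟩ := cdfOf_mem_Icc (P := P) (Z := Z) z
  constructor <;> linarith

variable (hg : IsDistortion g)
include hg

lemma distortedSurvival_le_of_cdfOf_le {Z₁ Z₂ : Ω → ℝ} {z₁ z₂ : ℝ}
    (h : cdfOf P Z₂ z₂ ≤ cdfOf P Z₁ z₁) :
    distortedSurvival g P Z₁ z₁ ≤ distortedSurvival g P Z₂ z₂ :=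
  hg.1 (one_sub_cdfOf_mem_Icc Z₁ z₁) (one_sub_cdfOf_mem_Icc Z₂ z₂) (by linarith)

lemma distortedSurvival_antitone (Z : Ω → ℝ) : Antitone (distortedSurvival g P Z) :=
  fun _ _ hab => distortedSurvival_le_of_cdfOf_le hg (cdfOf_mono hab)

lemma distortedSurvival_mem_Icc (Z : Ω → ℝ) (z : ℝ) : distortedSurvival g P Z z ∈ Icc 0 1 :=
  hg.2.1 _ (one_sub_cdfOf_mem_Icc Z z)

lemma intervalIntegrable_distortedSurvival (Z : Ω → ℝ) (a b : ℝ) :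
    IntervalIntegrable (distortedSurvival g P Z) volume a b :=
  (distortedSurvival_antitone hg Z).intervalIntegrable

lemma distortedSurvival_eq_zero {Z : Ω → ℝ} {z : ℝ} (hz : ∀ᵐ ω ∂P, Z ω ≤ z) :
    distortedSurvival g P Z z = 0 := by
  simp [distortedSurvival, cdfOf_eq_one hz, hg.2.2.1]

lemma distExp_eq_integral {Z : Ω → ℝ} {c : ℝ} (hc : 0 ≤ c) (hZ : ∀ᵐ ω ∂P, Z ω ≤ c) :
    distExp g P Z = ∫ z in 0..c, distortedSurvival g P Z z := by
  rw [intervalIntegral.integral_of_le hc]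
  refine setIntegral_eq_of_subset_of_forall_sdiff_eq_zero measurableSet_Ioi Ioc_subset_Ioi_self
    fun z hz => distortedSurvival_eq_zero hg ?_
  have hcz : c < z := not_le.mp fun hzc => hz.2 ⟨hz.1, hzc⟩
  filter_upwards [hZ] with ω hω using hω.trans hcz.le

lemma integral_le_distExp {Z : Ω → ℝ} {c M : ℝ} (hc : 0 ≤ c) (hZ : ∀ᵐ ω ∂P, Z ω ≤ M) :
    ∫ z in 0..c, distortedSurvival g P Z z ≤ distExp g P Z := by
  have hZ' : ∀ᵐ ω ∂P, Z ω ≤ max c M := by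
    filter_upwards [hZ] with ω hω using hω.trans (le_max_right c M)
  rw [distExp_eq_integral hg (hc.trans (le_max_left c M)) hZ']
  exact intervalIntegral.integral_mono_interval le_rfl hc (le_max_left c M)
    (Eventually.of_forall fun z => (distortedSurvival_mem_Icc hg Z z).1)
    (intervalIntegrable_distortedSurvival hg Z 0 _)

lemma distExp_eq_integral_of_cdfOf_eq_shift {Z X : Ω → ℝ} {c z : ℝ} (hc : 0 ≤ c)
    (hZ : ∀ᵐ ω ∂P, Z ω ≤ c) (hF : ∀ s ∈ Ioo 0 c, cdfOf P Z s = cdfOf P X (s + z)) :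
    distExp g P Z = ∫ t in z..z + c, distortedSurvival g P X t := by
  have hshift : ∫ s in 0..c, distortedSurvival g P X (s + z) =
      ∫ t in z..z + c, distortedSurvival g P X t := by
    rw [intervalIntegral.integral_comp_add_right, zero_add, add_comm c]
  rw [distExp_eq_integral hg hc hZ, ← hshift, intervalIntegral.integral_of_le hc,
    intervalIntegral.integral_of_le hc, integral_Ioc_eq_integral_Ioo,
    integral_Ioc_eq_integral_Ioo]
  exact setIntegral_congr_fun measurableSet_Ioo fun s hs => by
    simp only [distortedSurvival, hF s hs]

end DistortedSurvival

namespace IsCeded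

variable {I : ℝ → ℝ} (hI : IsCeded I) {x y : ℝ}
include hI

lemma apply_le_apply (hx : 0 ≤ x) (hxy : x ≤ y) : I x ≤ I y :=
  hI.2.1 (mem_Ici.mpr hx) (mem_Ici.mpr (hx.trans hxy)) hxy

lemma apply_sub_apply_le (hx : 0 ≤ x) (hxy : x ≤ y) : I y - I x ≤ y - x := by
  have := hI.2.2 (mem_Ici.mpr hx) (mem_Ici.mpr (hx.trans hxy)) hxy
  dsimp only at this
  linarith

lemma nonneg (hx : 0 ≤ x) : 0 ≤ I x := hI.1 ▸ hI.apply_le_apply le_rfl hx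

lemma le_self (hx : 0 ≤ x) : I x ≤ x := by
  simpa [hI.1] using hI.apply_sub_apply_le le_rfl hx

end IsCeded

/-- Summing over the uniform partition of `[a, b]` into `n` pieces gives
`φ b - φ a ≥ (b - a)(e b - e a) / n`; let `n → ∞`. -/
theorem le_of_forall_sub_mul_sub_le {φ e : ℝ → ℝ} {a b : ℝ} (hab : a ≤ b)
    (h : ∀ s u, a ≤ s → s < u → u ≤ b → (u - s) * (e u - e s) ≤ φ u - φ s) : φ a ≤ φ b := by
  rcases hab.eq_or_lt with rfl | hab
  · rfl
  have hpartition : ∀ n : ℕ, 0 < n → (b - a) * (e b - e a) / n ≤ φ b - φ a := by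
    intro n hn
    have hn' : (0 : ℝ) < n := Nat.cast_pos.mpr hn
    set δ := (b - a) / n
    set t : ℕ → ℝ := fun i => a + i * δ
    have hδ : 0 < δ := div_pos (by linarith) hn'
    have htn : t n = b := by simp only [t, δ]; field_simp; ring
    have hstep : ∀ i ∈ Finset.range n, δ * (e (t (i + 1)) - e (t i)) ≤ φ (t (i + 1)) - φ (t i) := by
      intro i hi
      have hi' : (i : ℝ) + 1 ≤ n := by exact_mod_cast Finset.mem_range.mp hi
      have := h (t i) (t (i + 1)) (le_add_of_nonneg_right (by positivity))
        (by simp only [t]; push_cast; linarith) (by rw [← htn]; simp only [t]; push_cast; nlinarith)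
      simpa [t, add_mul, add_sub_add_left_eq_sub] using this
    have hsum := Finset.sum_le_sum hstep
    rw [← Finset.mul_sum, Finset.sum_range_sub (fun i => e (t i)),
      Finset.sum_range_sub (fun i => φ (t i)), htn] at hsum
    simpa [t, δ, div_mul_eq_mul_div] using hsum
  have hlim := tendsto_const_div_atTop_nhds_zero_nat ((b - a) * (e b - e a))
  have := le_of_tendsto hlim (eventually_atTop.mpr ⟨1, fun n hn => hpartition n hn⟩)
  linarith

section Comparison

variable {Ω : Type*} [MeasurableSpace Ω] {P : Measure Ω} [IsProbabilityMeasure P]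
  {X : Ω → ℝ} {g : ℝ → ℝ} (hg : IsDistortion g)
  {I : ℝ → ℝ} (hI : IsCeded I) {k : ℝ}
include hg hI

lemma distortedSurvival_le_comp {t z : ℝ} (ht : 0 ≤ t) (hz : z < I t) :
    distortedSurvival g P X t ≤ distortedSurvival g P (fun ω => I (X ω)) z := by
  refine distortedSurvival_le_of_cdfOf_le hg
    (ENNReal.toReal_mono (measure_ne_top _ _) (measure_mono fun ω hω => ?_))
  by_contra hXt
  have : I t ≤ I (X ω) := hI.apply_le_apply ht (le_of_not_ge hXt)
  exact (hω : I (X ω) ≤ z).not_gt (hz.trans_le this)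

/-- For `z < I x`, the point `t = x - (I x - z)/2` has `z < I t` because `I` is 1-Lipschitz. -/
lemma le_mul_integral_of_le_threshold {z₀ x : ℝ} (hx : 0 ≤ x) (hxz : x ≤ z₀) (hk : 0 ≤ k)
    (hlow : ∀ t < z₀, 1 ≤ k * distortedSurvival g P X t) :
    I x ≤ k * ∫ z in 0..I x, distortedSurvival g P (fun ω => I (X ω)) z := by
  have hIx := hI.le_self hx
  have hcover : ∀ z ∈ Ioo 0 (I x), 1 ≤ k * distortedSurvival g P (fun ω => I (X ω)) z := by
    intro z ⟨hz0, hzx⟩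
    have ht : 0 ≤ x - (I x - z) / 2 := by linarith
    have hIt := hI.apply_sub_apply_le ht (by linarith : x - (I x - z) / 2 ≤ x)
    calc 1 ≤ k * distortedSurvival g P X (x - (I x - z) / 2) := hlow _ (by linarith)
      _ ≤ _ := mul_le_mul_of_nonneg_left
          (distortedSurvival_le_comp hg hI ht (by linarith)) hk
  calc I x = ∫ _ in 0..I x, (1 : ℝ) := by simp
    _ ≤ ∫ z in 0..I x, k * distortedSurvival g P (fun ω => I (X ω)) z :=
        intervalIntegral.integral_mono_on_of_le_Ioo (hI.nonneg hx) intervalIntegrable_const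
          ((intervalIntegrable_distortedSurvival hg _ _ _).const_mul k) hcover
    _ = _ := intervalIntegral.integral_const_mul _ _

/-- The cover `I u - I s` is priced at least at `k g(S_X(u)) ≤ 1` per unit, while
`g(S_X) ≤ g(S_X(s))` on `(s, u]`. -/
lemma sub_mul_sub_le_of_ceded {s u : ℝ} (hs : 0 ≤ s) (hsu : s ≤ u) (hk : 0 ≤ k)
    (hu : k * distortedSurvival g P X u ≤ 1) :
    (u - s) * (k * distortedSurvival g P X u - k * distortedSurvival g P X s) ≤
      u - s - (I u - I s) + k * (∫ z in I s..I u, distortedSurvival g P (fun ω => I (X ω)) z)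
        - k * ∫ t in s..u, distortedSurvival g P X t := by
  have hu0 : 0 ≤ u := hs.trans hsu
  have hIsu := hI.apply_le_apply hs hsu
  have hIlip := hI.apply_sub_apply_le hs hsu
  have hcover : (I u - I s) * distortedSurvival g P X u ≤
      ∫ z in I s..I u, distortedSurvival g P (fun ω => I (X ω)) z := by
    simpa using intervalIntegral.integral_mono_on_of_le_Ioo hIsu intervalIntegrable_const
      (intervalIntegrable_distortedSurvival hg _ _ _)
      fun z hz => distortedSurvival_le_comp hg hI hu0 hz.2
  have hlayer : ∫ t in s..u, distortedSurvival g P X t ≤ (u - s) * distortedSurvival g P X s := by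
    simpa using intervalIntegral.integral_mono_on_of_le_Ioo hsu
      (intervalIntegrable_distortedSurvival hg _ _ _) intervalIntegrable_const
      fun t ht => distortedSurvival_antitone hg X ht.1.le
  nlinarith [mul_nonneg (by linarith : 0 ≤ u - s - (I u - I s)) (by linarith : 0 ≤ 1 -
      k * distortedSurvival g P X u), mul_le_mul_of_nonneg_left hcover hk,
    mul_le_mul_of_nonneg_left hlayer hk]

lemma le_mul_integral_of_threshold_le {z₀ x : ℝ} (hz₀ : 0 ≤ z₀) (hzx : z₀ ≤ x) (hk : 0 ≤ k)
    (hlow : ∀ t < z₀, 1 ≤ k * distortedSurvival g P X t)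
    (hup : ∀ t, z₀ < t → k * distortedSurvival g P X t ≤ 1) :
    z₀ + k * ∫ t in z₀..x, distortedSurvival g P X t ≤
      x - I x + k * ∫ z in 0..I x, distortedSurvival g P (fun ω => I (X ω)) z := by
  let φ : ℝ → ℝ := fun t => t - I t
    + k * (∫ z in 0..I t, distortedSurvival g P (fun ω => I (X ω)) z)
    - k * ∫ t' in z₀..t, distortedSurvival g P X t'
  have hstart : z₀ ≤ φ z₀ := by
    have := le_mul_integral_of_le_threshold hg hI hz₀ le_rfl hk hlow
    simp only [φ, intervalIntegral.integral_same]
    linarith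
  have hmono : φ z₀ ≤ φ x := by
    refine le_of_forall_sub_mul_sub_le (e := fun t => k * distortedSurvival g P X t) hzx
      fun s u hs hsu _ => ?_
    have hstep := sub_mul_sub_le_of_ceded hg hI (hz₀.trans hs) hsu.le hk (hup u (hs.trans_lt hsu))
    have hI' := intervalIntegral.integral_interval_sub_left
      (intervalIntegrable_distortedSurvival (P := P) hg (fun ω => I (X ω)) 0 (I u))
      (intervalIntegrable_distortedSurvival (P := P) hg (fun ω => I (X ω)) 0 (I s))
    have hX' := intervalIntegral.integral_interval_sub_left
      (intervalIntegrable_distortedSurvival (P := P) hg X z₀ u)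
      (intervalIntegrable_distortedSurvival (P := P) hg X z₀ s)
    simp only [φ]
    linear_combination hstep - k * hI' + k * hX'
  have := hstart.trans hmono
  simp only [φ] at this
  linarith

lemma integral_le_distExp_comp (hXnn : ∀ ω, 0 ≤ X ω) {M : ℝ} (hM : ∀ᵐ ω ∂P, X ω ≤ M)
    {x : ℝ} (hx : 0 ≤ x) :
    ∫ z in 0..I x, distortedSurvival g P (fun ω => I (X ω)) z ≤
      distExp g P (fun ω => I (X ω)) :=
  integral_le_distExp hg (hI.nonneg hx)
    (by filter_upwards [hM] with ω hω using (hI.le_self (hXnn ω)).trans hω)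

lemma le_retention_add_premium_of_le_threshold (hXnn : ∀ ω, 0 ≤ X ω) {M : ℝ}
    (hM : ∀ᵐ ω ∂P, X ω ≤ M) {z₀ x : ℝ} (hx : 0 ≤ x) (hxz : x ≤ z₀) (hk : 0 ≤ k)
    (hlow : ∀ t < z₀, 1 ≤ k * distortedSurvival g P X t) :
    x ≤ x - I x + k * distExp g P (fun ω => I (X ω)) := by
  linarith [le_mul_integral_of_le_threshold hg hI hx hxz hk hlow,
    mul_le_mul_of_nonneg_left (integral_le_distExp_comp hg hI hXnn hM hx) hk]

lemma threshold_add_integral_le_retention_add_premium (hXnn : ∀ ω, 0 ≤ X ω) {M : ℝ}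
    (hM : ∀ᵐ ω ∂P, X ω ≤ M) {z₀ x : ℝ} (hz₀ : 0 ≤ z₀) (hzx : z₀ ≤ x) (hk : 0 ≤ k)
    (hlow : ∀ t < z₀, 1 ≤ k * distortedSurvival g P X t)
    (hup : ∀ t, z₀ < t → k * distortedSurvival g P X t ≤ 1) :
    z₀ + k * ∫ t in z₀..x, distortedSurvival g P X t ≤
      x - I x + k * distExp g P (fun ω => I (X ω)) := by
  linarith [le_mul_integral_of_threshold_le hg hI hz₀ hzx hk hlow hup,
    mul_le_mul_of_nonneg_left (integral_le_distExp_comp hg hI hXnn hM (hz₀.trans hzx)) hk]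

end Comparison

section Threshold

variable {Ω : Type*} [MeasurableSpace Ω] {P : Measure Ω} [IsProbabilityMeasure P]
  {X : Ω → ℝ} {g : ℝ → ℝ} (hg : IsDistortion g) {M : ℝ}
include hg

lemma threshold_spec (hXnn : ∀ ω, 0 ≤ X ω) (hM : ∀ᵐ ω ∂P, X ω ≤ M) {k z₀ : ℝ} (hk : 1 ≤ k)
    (hz₀ : z₀ = sSup {z : ℝ | 1 ≤ k * g (1 - cdfOf P X z)}) :
    0 ≤ z₀ ∧ z₀ ≤ M ∧ (∀ t < z₀, 1 ≤ k * distortedSurvival g P X t) ∧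
      ∀ t, z₀ < t → k * distortedSurvival g P X t ≤ 1 := by
  set A := {z : ℝ | 1 ≤ k * g (1 - cdfOf P X z)}
  have hneg : ∀ t < 0, t ∈ A := fun t ht => by
    simpa [A, cdfOf_eq_zero fun ω => ht.trans_le (hXnn ω), hg.2.2.2] using hk
  have hbdd : ∀ t ∈ A, t ≤ M := fun t ht => by
    by_contra! hMt
    have h0 : distortedSurvival g P X t = 0 :=
      distortedSurvival_eq_zero hg (by filter_upwards [hM] with ω hω using hω.trans hMt.le)
    have ht' : 1 ≤ k * distortedSurvival g P X t := ht
    rw [h0] at ht'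
    linarith
  have hne : A.Nonempty := ⟨-1, hneg _ (by norm_num)⟩
  refine ⟨?_, hz₀ ▸ csSup_le hne hbdd, fun t ht => ?_, fun t ht => ?_⟩
  · exact forall_lt_imp_le_iff_le_of_dense.mp fun t ht => hz₀ ▸ le_csSup ⟨M, hbdd⟩ (hneg t ht)
  · obtain ⟨a, ha, hta⟩ := exists_lt_of_lt_csSup hne (hz₀ ▸ ht)
    exact ha.trans (mul_le_mul_of_nonneg_left (distortedSurvival_antitone hg X hta.le)
      (by linarith))
  · by_contra! h
    exact ht.not_ge (hz₀ ▸ le_csSup ⟨M, hbdd⟩ h.le)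

lemma integral_distortedSurvival_pos (hgstrict : StrictMonoOn g (Icc 0 1))
    (hF : StrictMonoOn (cdfOf P X) (Icc 0 M)) (hM : ∀ᵐ ω ∂P, X ω ≤ M) {a b : ℝ} (ha : 0 ≤ a)
    (hab : a < b) (hbM : b ≤ M) : 0 < ∫ t in a..b, distortedSurvival g P X t := by
  refine intervalIntegral.intervalIntegral_pos_of_pos_on
    (intervalIntegrable_distortedSurvival hg X a b) (fun t ⟨hat, htb⟩ => ?_) hab
  have hFt : cdfOf P X t < 1 :=
    cdfOf_eq_one hM ▸ hF ⟨by linarith, by linarith⟩ ⟨by linarith, le_rfl⟩ (by linarith)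
  have := hgstrict ⟨le_rfl, zero_le_one⟩ (one_sub_cdfOf_mem_Icc X t) (by linarith)
  rwa [hg.2.2.1] at this

end Threshold

lemma Lfun_eq {Ω : Type*} [MeasurableSpace Ω] (P : Measure Ω) (X : Ω → ℝ) (g h : ℝ → ℝ)
    (ϱ a b : ℝ) :
    Lfun P X g h ϱ a b = h b + a + (1 + ϱ) * ∫ t in a..b, distortedSurvival g P X t := rfl

section Objective

variable {Ω : Type*} [MeasurableSpace Ω] {P : Measure Ω} [IsProbabilityMeasure P]
  {X : Ω → ℝ} {g h : ℝ → ℝ} {ϱ : ℝ}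

lemma objVal_le_of_ae {w₀ ξ : ℝ} {I : ℝ → ℝ} {E : Set Ω}
    (hE : ∀ᵐ ω ∂P,
      ξ ≤ w₀ - h (X ω) - X ω + I (X ω) - (1 + ϱ) * distExp g P (fun ω' => I (X ω')) → ω ∈ E) :
    objVal P X g h ϱ w₀ ξ I ≤ (P E).toReal :=
  ENNReal.toReal_mono (measure_ne_top _ _) (measure_mono_ae hE)

variable (hg : IsDistortion g)
include hg

lemma Lfun_sub_Lfun (a b c : ℝ) :
    Lfun P X g h ϱ a c - Lfun P X g h ϱ a b =
      h c - h b + (1 + ϱ) * ∫ t in b..c, distortedSurvival g P X t := by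
  rw [Lfun_eq, Lfun_eq, ← intervalIntegral.integral_interval_sub_left
    (intervalIntegrable_distortedSurvival hg X a c) (intervalIntegrable_distortedSurvival hg X a b)]
  ring

lemma Lfun_strictMonoOn (hgstrict : StrictMonoOn g (Icc 0 1)) {M : ℝ}
    (hF : StrictMonoOn (cdfOf P X) (Icc 0 M)) (hM : ∀ᵐ ω ∂P, X ω ≤ M) (hϱ : 0 ≤ ϱ)
    (hh : MonotoneOn h (Icc 0 M)) {a : ℝ} (ha : 0 ≤ a) :
    StrictMonoOn (Lfun P X g h ϱ a) (Icc a M) := by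
  intro b hb c hc hbc
  have hpos := integral_distortedSurvival_pos hg hgstrict hF hM (ha.trans hb.1) hbc hc.2
  have hhbc := hh ⟨ha.trans hb.1, hb.2⟩ ⟨ha.trans hc.1, hc.2⟩ hbc.le
  have := Lfun_sub_Lfun (P := P) (X := X) (h := h) (ϱ := ϱ) hg a b c
  nlinarith [mul_pos (by linarith : (0 : ℝ) < 1 + ϱ) hpos]

lemma Lfun_continuousOn {a M : ℝ} (hh : ContinuousOn h (Icc a M)) :
    ContinuousOn (Lfun P X g h ϱ a) (Icc a M) :=
  (hh.add continuousOn_const).add (continuousOn_const.mul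
    (intervalIntegral.continuous_primitive
      (intervalIntegrable_distortedSurvival hg X) a).continuousOn)

lemma distExp_Ifun {z b : ℝ} (hzb : z ≤ b) :
    distExp g P (fun ω => Ifun z b (X ω)) = ∫ t in z..b, distortedSurvival g P X t := by
  have hbound : ∀ ω, Ifun z b (X ω) ≤ b - z := fun ω => by
    unfold Ifun; split_ifs <;> linarith
  have hshift := distExp_eq_integral_of_cdfOf_eq_shift (P := P) (X := X) (z := z) hg
    (sub_nonneg.mpr hzb) (Eventually.of_forall hbound) fun s hs => by
      unfold cdfOf Ifun
      congr 2
      ext ω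
      simp only [mem_ofPred_eq]
      split_ifs <;> constructor <;> intro <;> linarith [hs.1, hs.2]
  rwa [add_sub_cancel] at hshift

lemma distExp_max_sub {z M : ℝ} (hM : ∀ᵐ ω ∂P, X ω ≤ M) (hzM : z ≤ M) :
    distExp g P (fun ω => max (X ω - z) 0) = ∫ t in z..M, distortedSurvival g P X t := by
  have hbound : ∀ᵐ ω ∂P, max (X ω - z) 0 ≤ M - z := by
    filter_upwards [hM] with ω hω using max_le (by linarith) (by linarith)
  have hshift := distExp_eq_integral_of_cdfOf_eq_shift (P := P) (X := X) (z := z) hg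
    (sub_nonneg.mpr hzM) hbound fun s hs => by
      unfold cdfOf
      congr 2
      ext ω
      simp only [mem_ofPred_eq, max_le_iff]
      constructor
      · intro hω; linarith [hω.1]
      · intro hω; exact ⟨by linarith, hs.1.le⟩
  rwa [add_sub_cancel] at hshift

lemma objVal_zero (w₀ ξ : ℝ) :
    objVal P X g h ϱ w₀ ξ (fun _ => 0) = (P {ω | h (X ω) + X ω ≤ w₀ - ξ}).toReal := by
  have hzero : distExp g P (fun _ : Ω => (0 : ℝ)) = 0 := by
    simpa using distExp_eq_integral hg le_rfl (Eventually.of_forall fun (_ : Ω) => le_refl (0 : ℝ))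
  unfold objVal
  congr 2
  ext ω
  simp only [mem_ofPred_eq, hzero]
  constructor <;> intro <;> linarith

lemma objVal_Ifun_eq_cdfOf {M z b w₀ ξ : ℝ} (hM : ∀ᵐ ω ∂P, X ω ≤ M) (hXnn : ∀ ω, 0 ≤ X ω)
    (hh : MonotoneOn h (Icc 0 M)) (hz : 0 ≤ z) (hzb : z ≤ b) (hbM : b ≤ M)
    (hL : Lfun P X g h ϱ z b = w₀ - ξ) :
    objVal P X g h ϱ w₀ ξ (Ifun z b) = cdfOf P X b := by
  unfold objVal cdfOf
  congr 1
  refine measure_congr (eventuallyEq_set.mpr ?_)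
  filter_upwards [hM] with ω hωM
  have hle : X ω ≤ b → h (X ω) ≤ h b := hh ⟨hXnn ω, hωM⟩ ⟨hz.trans hzb, hbM⟩
  have hge : b < X ω → h b ≤ h (X ω) := fun hb => hh ⟨hz.trans hzb, hbM⟩ ⟨hXnn ω, hωM⟩ hb.le
  rw [Lfun_eq] at hL
  rw [distExp_Ifun hg hzb]
  unfold Ifun
  split_ifs with h₁ h₂
  · exact iff_of_true (by linarith [hle (by linarith)]) (by linarith)
  · exact iff_of_true (by linarith [hle h₂]) h₂
  · exact iff_of_false (by linarith [hge (not_le.mp h₂)]) h₂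

end Objective

theorem optimal_reinsurance_comonotonic_background_general {Ω : Type*} [MeasurableSpace Ω]
    (P : Measure Ω) [IsProbabilityMeasure P]
    (X : Ω → ℝ) (hXnn : ∀ ω, 0 ≤ X ω)
    (M : ℝ) (hMbound : ∀ᵐ ω ∂P, X ω ≤ M)
    (hFXstrict : StrictMonoOn (cdfOf P X) (Set.Icc 0 M))
    (g : ℝ → ℝ) (hg : IsDistortion g)
    (hgstrict : StrictMonoOn g (Set.Icc 0 1))
    (ϱ : ℝ) (hϱ : 0 ≤ ϱ)
    (h : ℝ → ℝ) (hhcont : ContinuousOn h (Set.Icc 0 M)) (hhmono : MonotoneOn h (Set.Icc 0 M))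
    (w₀ ξ : ℝ)
    (z₀ : ℝ) (hz₀ : z₀ = sSup {z : ℝ | 1 ≤ (1 + ϱ) * g (1 - cdfOf P X z)})
    (hass1 : w₀ - ξ < h M + z₀ + (1 + ϱ) * distExp g P (fun ω => max (X ω - z₀) 0)) :
    (h z₀ + z₀ ≥ w₀ - ξ →
      ∀ I : ℝ → ℝ, IsCeded I →
        objVal P X g h ϱ w₀ ξ I ≤ objVal P X g h ϱ w₀ ξ (fun _ => 0)) ∧
    (h z₀ + z₀ < w₀ - ξ →
      ∃ bs ∈ Set.Ioo z₀ M, Lfun P X g h ϱ z₀ bs = w₀ - ξ ∧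
        (∀ I : ℝ → ℝ, IsCeded I →
          objVal P X g h ϱ w₀ ξ I ≤ objVal P X g h ϱ w₀ ξ (Ifun z₀ bs)) ∧
        objVal P X g h ϱ w₀ ξ (Ifun z₀ bs) = cdfOf P X bs) := by
  have hk : 0 ≤ 1 + ϱ := by linarith
  obtain ⟨hz₀0, hz₀M, hlow, hup⟩ := threshold_spec hg hXnn hMbound (by linarith) hz₀
  have hLmono := Lfun_strictMonoOn (h := h) hg hgstrict hFXstrict hMbound hϱ hhmono hz₀0
  have hLz₀ : Lfun P X g h ϱ z₀ z₀ = h z₀ + z₀ := by simp [Lfun_eq]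
  have habove : ∀ I, IsCeded I → ∀ ω, z₀ ≤ X ω →
      ξ ≤ w₀ - h (X ω) - X ω + I (X ω) - (1 + ϱ) * distExp g P (fun ω' => I (X ω')) →
      Lfun P X g h ϱ z₀ (X ω) ≤ w₀ - ξ := fun I hI ω hω hevent => by
    rw [Lfun_eq]
    linarith [threshold_add_integral_le_retention_add_premium hg hI hXnn hMbound hz₀0 hω hk
      hlow hup]
  constructor
  · intro hcase I hI
    rw [objVal_zero hg]
    refine objVal_le_of_ae ?_
    filter_upwards [hMbound] with ω hωM hevent
    rcases le_or_gt (X ω) z₀ with hle | hlt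
    · show h (X ω) + X ω ≤ w₀ - ξ
      linarith [le_retention_add_premium_of_le_threshold hg hI hXnn hMbound (hXnn ω) hle hk hlow]
    · linarith [hLmono ⟨le_rfl, hz₀M⟩ ⟨hlt.le, hωM⟩ hlt, habove I hI ω hlt.le hevent]
  · intro hcase
    have hLM : Lfun P X g h ϱ z₀ M =
        h M + z₀ + (1 + ϱ) * distExp g P (fun ω => max (X ω - z₀) 0) := by
      rw [Lfun_eq, distExp_max_sub hg hMbound hz₀M]
    obtain ⟨bs, hbs, hbsL⟩ := intermediate_value_Ioo hz₀M
      (Lfun_continuousOn hg (hhcont.mono (Icc_subset_Icc_left hz₀0)))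
      (⟨by linarith, by linarith⟩ : w₀ - ξ ∈ Ioo _ _)
    have hval := objVal_Ifun_eq_cdfOf hg hMbound hXnn hhmono hz₀0 hbs.1.le hbs.2.le hbsL
    refine ⟨bs, hbs, hbsL, fun I hI => ?_, hval⟩
    rw [hval]
    refine objVal_le_of_ae (E := {ω | X ω ≤ bs}) ?_
    filter_upwards [hMbound] with ω hωM hevent
    by_contra! hbX
    linarith [hLmono ⟨hbs.1.le, hbs.2.le⟩ ⟨(hbs.1.trans hbX).le, hωM⟩ hbX,
      habove I hI ω (hbs.1.trans hbX).le hevent]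

/-- **Theorem C.1.** Optimal reinsurance with a comonotonic background risk
`Y = h(X)`. With `z₀ = sup{z : (1+ϱ)g(S_X(z)) ≥ 1}`, under the assumption
`h(M) + z₀ + π^g((X−z₀)₊) > w₀ − ξ ≥ h(0)`: (i) if `h(z₀) + z₀ ≥ w₀ − ξ` then no reinsurance
(`I ≡ 0`) is optimal; (ii) if `h(z₀) + z₀ < w₀ − ξ` then there is `b* ∈ (z₀, M)` with
`L(z₀,b*) = w₀ − ξ` and the stop-loss contract with upper limit `I_{z₀,b*}` is optimal, with
optimal value `F_X(b*)`. -/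
theorem optimal_reinsurance_comonotonic_background {Ω : Type*} [MeasurableSpace Ω]
    (P : Measure Ω) [IsProbabilityMeasure P]
    (X : Ω → ℝ) (hX : Measurable X) (hXnn : ∀ ω, 0 ≤ X ω)
    (M : ℝ) (hMbound : ∀ᵐ ω ∂P, X ω ≤ M)
    (hMleast : ∀ M' : ℝ, (∀ᵐ ω ∂P, X ω ≤ M') → M ≤ M')
    (hFXcont : Continuous (cdfOf P X))
    (hFXstrict : StrictMonoOn (cdfOf P X) (Set.Icc 0 M))
    (g : ℝ → ℝ) (hg : IsDistortion g)
    (hgcont : ContinuousOn g (Set.Icc 0 1)) (hgstrict : StrictMonoOn g (Set.Icc 0 1))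
    (ϱ : ℝ) (hϱ : 0 ≤ ϱ)
    (h : ℝ → ℝ) (hhcont : ContinuousOn h (Set.Icc 0 M)) (hhmono : MonotoneOn h (Set.Icc 0 M))
    (w₀ ξ : ℝ)
    (z₀ : ℝ) (hz₀ : z₀ = sSup {z : ℝ | 1 ≤ (1 + ϱ) * g (1 - cdfOf P X z)})
    (hass1 : w₀ - ξ < h M + z₀ + (1 + ϱ) * distExp g P (fun ω => max (X ω - z₀) 0))
    (hass2 : h 0 ≤ w₀ - ξ) :
    (h z₀ + z₀ ≥ w₀ - ξ →
      ∀ I : ℝ → ℝ, IsCeded I →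
        objVal P X g h ϱ w₀ ξ I ≤ objVal P X g h ϱ w₀ ξ (fun _ => 0)) ∧
    (h z₀ + z₀ < w₀ - ξ →
      ∃ bs ∈ Set.Ioo z₀ M, Lfun P X g h ϱ z₀ bs = w₀ - ξ ∧
        (∀ I : ℝ → ℝ, IsCeded I →
          objVal P X g h ϱ w₀ ξ I ≤ objVal P X g h ϱ w₀ ξ (Ifun z₀ bs)) ∧
        objVal P X g h ϱ w₀ ξ (Ifun z₀ bs) = cdfOf P X bs) :=
  optimal_reinsurance_comonotonic_background_general P X hXnn M hMbound hFXstrict g hg hgstrict ϱ hϱ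
    h hhcont hhmono w₀ ξ z₀ hz₀ hass1
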